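/- Let a²,b²,c² > 0, k ∈ ℤ∖{0}, 0 < R ≤ ∞, and let w₀, w₁, w₂ ∈ C²((0,R)) be such that the map Q(x) = w₀(r)E₀ + w₁(r)E₁(φ) + w₂(r)E₂(φ) (x = (r cos φ, r sin φ)) extends to a C² map on all of B_R and satisfies ΔQ = −a²Q − b²(Q² − (1/3)|Q|²I₃) + c²|Q|²Q on B_R. Then w₁'(r)w₂(r) − w₂'(r)w₁(r) = 0 for every r ∈ (0,R). -/

import Mathlib

open Real Matrix
open scoped ENNReal

noncomputable section

abbrev Mat3 := Matrix (Fin 3) (Fin 3) ℝ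

/-- `Q` is a symmetric traceless 3×3 real matrix, i.e. an element of `S₀`. -/
def isS0 (Q : Mat3) : Prop := Qᵀ = Q ∧ Q.trace = 0

def e1 : Fin 3 → ℝ := ![1, 0, 0]
def e2 : Fin 3 → ℝ := ![0, 1, 0]
def e3 : Fin 3 → ℝ := ![0, 0, 1]

/-- `n(φ) = (cos(kφ/2), sin(kφ/2), 0)`. -/
def nvec (k : ℤ) (φ : ℝ) : Fin 3 → ℝ := ![Real.cos ((k : ℝ) * φ / 2), Real.sin ((k : ℝ) * φ / 2), 0]

/-- `m(φ) = (−sin(kφ/2), cos(kφ/2), 0)`. -/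
def mvec (k : ℤ) (φ : ℝ) : Fin 3 → ℝ := ![-Real.sin ((k : ℝ) * φ / 2), Real.cos ((k : ℝ) * φ / 2), 0]

/-- `I₂ = I₃ − e₃ ⊗ e₃`. -/
def I2 : Mat3 := 1 - vecMulVec e3 e3

def E0 : Mat3 := Real.sqrt (3/2) • (vecMulVec e3 e3 - (1/3 : ℝ) • (1 : Mat3))
def E1 (k : ℤ) (φ : ℝ) : Mat3 :=
  Real.sqrt 2 • (vecMulVec (nvec k φ) (nvec k φ) - (1/2 : ℝ) • I2)
def E2mat (k : ℤ) (φ : ℝ) : Mat3 :=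
  (Real.sqrt 2)⁻¹ • (vecMulVec (nvec k φ) (mvec k φ) + vecMulVec (mvec k φ) (nvec k φ))
def E3mat : Mat3 := (Real.sqrt 2)⁻¹ • (vecMulVec e1 e3 + vecMulVec e3 e1)
def E4mat : Mat3 := (Real.sqrt 2)⁻¹ • (vecMulVec e2 e3 + vecMulVec e3 e2)

/-- The rotation `R_k(ψ)` of winding `k/2` about the vertical axis. -/
def Rk (k : ℤ) (ψ : ℝ) : Mat3 :=
  !![Real.cos ((k : ℝ) * ψ / 2), -Real.sin ((k : ℝ) * ψ / 2), 0;
     Real.sin ((k : ℝ) * ψ / 2),  Real.cos ((k : ℝ) * ψ / 2), 0;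
     0, 0, 1]

/-- The Landau-de Gennes bulk potential. -/
def fbulk (a2 b2 c2 : ℝ) (Q : Mat3) : ℝ :=
  -(a2/2) * (Q*Q).trace - (b2/3) * (Q*Q*Q).trace + (c2/4) * ((Q*Q).trace)^2

/-- The constant `s₊ = (b² + √(b⁴ + 24a²c²))/(4c²)`. -/
def splus (a2 b2 c2 : ℝ) : ℝ := (b2 + Real.sqrt (b2^2 + 24*a2*c2)) / (4*c2)

/-- Laplacian of a scalar function on `ℝ²`, as the sum of the two repeated partial
derivatives along the coordinate axes. -/
def lap (f : ℝ × ℝ → ℝ) (p : ℝ × ℝ) : ℝ :=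
  deriv (fun t => deriv (fun s => f (s, p.2)) t) p.1 +
  deriv (fun t => deriv (fun s => f (p.1, s)) t) p.2

/-- Componentwise Laplacian of a matrix-valued map on `ℝ²`. -/
def matLap (Q : ℝ × ℝ → Mat3) (p : ℝ × ℝ) : Mat3 :=
  Matrix.of fun i j => lap (fun x => Q x i j) p

/-- Squared norm of the gradient of a scalar function on `ℝ²`. -/
def gradNormSq (f : ℝ × ℝ → ℝ) (p : ℝ × ℝ) : ℝ :=
  (fderiv ℝ f p (1, 0))^2 + (fderiv ℝ f p (0, 1))^2

/-- `|∇Q|²`: sum over all matrix entries of the squared norms of their gradients. -/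
def matGradNormSq (Q : ℝ × ℝ → Mat3) (p : ℝ × ℝ) : ℝ :=
  ∑ i, ∑ j, gradNormSq (fun x => Q x i j) p

/-- Membership in the open disk of radius `R ∈ (0,∞]` centered at the origin. -/
def inBall (R : ℝ≥0∞) (x : ℝ × ℝ) : Prop :=
  ENNReal.ofReal (Real.sqrt (x.1^2 + x.2^2)) < R

/-- The right-hand side of the Euler–Lagrange equation
`ΔQ = −a²Q − b²(Q² − (1/3)|Q|²I₃) + c²|Q|²Q`. -/
def ELrhs (a2 b2 c2 : ℝ) (A : Mat3) : Mat3 :=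
  -a2 • A - b2 • (A * A - ((1/3 : ℝ) * (A * A).trace) • (1 : Mat3)) + (c2 * (A * A).trace) • A

/-- Frobenius squared norm of a 3×3 matrix. -/
def frobSq (A : Mat3) : ℝ := ∑ i, ∑ j, (A i j)^2

/-- For `x = (x₁,x₂) ∈ ℝ²`, `x̃ = (x₁,x₂,0) ∈ ℝ³`. -/
def tilde (x : ℝ × ℝ) : Fin 3 → ℝ := ![x.1, x.2, 0]

/-- The projection `P₂(x₁,x₂,x₃) = (x₁,x₂)`. -/
def P2 (v : Fin 3 → ℝ) : ℝ × ℝ := (v 0, v 1)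

/-- The antisymmetric matrix `S₀ = e₂⊗e₁ − e₁⊗e₂`. -/
def S0mat : Mat3 := vecMulVec e2 e1 - vecMulVec e1 e2

end

/-!
The components `coordE1 Q = ⟨Q, E₁(0)⟩` and `coordE2 Q = ⟨Q, E₂(0)⟩` restrict to `w₁` and `w₂` on
the positive `x₁`-axis, and the ansatz makes their Laplacians there equal to
`w₁'' + w₁'/r − k²w₁/r²` and `w₂'' + w₂'/r − k²w₂/r²`. The matrix `Q(r, 0)` is block diagonal for
the splitting `span(e₁, e₂) ⊕ span(e₃)`, and on such matrices the right-hand side of the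
Euler–Lagrange equation acts on the pair `(coordE1, coordE2)` as multiplication by a scalar. Hence
`(Δ coordE1) w₂ = (Δ coordE2) w₁`, which says exactly that `(r (w₁'w₂ − w₂'w₁))' = 0` on `(0, R)`.
Since `Q` is `C¹` at the origin, `r (w₁'w₂ − w₂'w₁) → 0` as `r → 0⁺`, so this constant is `0`.
-/

open Filter Topology Set

structure HasDeriv2At (f f' : ℝ → ℝ) (f'' : ℝ) (x : ℝ) : Prop where
  eventually_hasDerivAt : ∀ᶠ y in 𝓝 x, HasDerivAt f (f' y) y
  hasDerivAt_deriv : HasDerivAt f' f'' x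

namespace HasDeriv2At

variable {f g f' g' : ℝ → ℝ} {f'' g'' x : ℝ}

theorem hasDerivAt (h : HasDeriv2At f f' f'' x) : HasDerivAt f (f' x) x :=
  h.eventually_hasDerivAt.self_of_nhds

theorem deriv_deriv (h : HasDeriv2At f f' f'' x) : deriv (deriv f) x = f'' := by
  have : deriv f =ᶠ[𝓝 x] f' := h.eventually_hasDerivAt.mono fun _ hy => hy.deriv
  rw [this.deriv_eq, h.hasDerivAt_deriv.deriv]

theorem congr_of_eventuallyEq (h : HasDeriv2At f f' f'' x) (hg : g =ᶠ[𝓝 x] f) :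
    HasDeriv2At g f' f'' x where
  eventually_hasDerivAt := by
    filter_upwards [h.eventually_hasDerivAt, hg.eventuallyEq_nhds] with y hy hgy
    exact hy.congr_of_eventuallyEq hgy
  hasDerivAt_deriv := h.hasDerivAt_deriv

theorem add (hf : HasDeriv2At f f' f'' x) (hg : HasDeriv2At g g' g'' x) :
    HasDeriv2At (fun y => f y + g y) (fun y => f' y + g' y) (f'' + g'') x where
  eventually_hasDerivAt := by
    filter_upwards [hf.eventually_hasDerivAt, hg.eventually_hasDerivAt] with y hfy hgy
    exact hfy.add hgy
  hasDerivAt_deriv := hf.hasDerivAt_deriv.add hg.hasDerivAt_deriv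

theorem sub (hf : HasDeriv2At f f' f'' x) (hg : HasDeriv2At g g' g'' x) :
    HasDeriv2At (fun y => f y - g y) (fun y => f' y - g' y) (f'' - g'') x where
  eventually_hasDerivAt := by
    filter_upwards [hf.eventually_hasDerivAt, hg.eventually_hasDerivAt] with y hfy hgy
    exact hfy.sub hgy
  hasDerivAt_deriv := hf.hasDerivAt_deriv.sub hg.hasDerivAt_deriv

theorem const_mul (c : ℝ) (hf : HasDeriv2At f f' f'' x) :
    HasDeriv2At (fun y => c * f y) (fun y => c * f' y) (c * f'') x where
  eventually_hasDerivAt := hf.eventually_hasDerivAt.mono fun _ hy => hy.const_mul c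
  hasDerivAt_deriv := hf.hasDerivAt_deriv.const_mul c

theorem mul (hf : HasDeriv2At f f' f'' x) (hg : HasDeriv2At g g' g'' x) :
    HasDeriv2At (fun y => f y * g y) (fun y => f' y * g y + f y * g' y)
      (f'' * g x + 2 * f' x * g' x + f x * g'') x where
  eventually_hasDerivAt := by
    filter_upwards [hf.eventually_hasDerivAt, hg.eventually_hasDerivAt] with y hfy hgy
    exact hfy.mul hgy
  hasDerivAt_deriv := ((hf.hasDerivAt_deriv.fun_mul hg.hasDerivAt).fun_add
    (hf.hasDerivAt.fun_mul hg.hasDerivAt_deriv)).congr_deriv (by ring)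

theorem comp {u u' : ℝ → ℝ} {u'' : ℝ} (hu : HasDeriv2At u u' u'' (f x))
    (hf : HasDeriv2At f f' f'' x) :
    HasDeriv2At (fun y => u (f y)) (fun y => u' (f y) * f' y)
      (u'' * f' x ^ 2 + u' (f x) * f'') x where
  eventually_hasDerivAt := by
    have hu' := hf.hasDerivAt.continuousAt.eventually hu.eventually_hasDerivAt
    filter_upwards [hf.eventually_hasDerivAt, hu'] with y hfy huy
    exact huy.comp y hfy
  hasDerivAt_deriv :=
    ((hu.hasDerivAt_deriv.comp x hf.hasDerivAt).fun_mul hf.hasDerivAt_deriv).congr_deriv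
      (by simp only [Function.comp_apply]; ring)

end HasDeriv2At

theorem ContDiffAt.hasDeriv2At {f : ℝ → ℝ} {x : ℝ} (hf : ContDiffAt ℝ 2 f x) :
    HasDeriv2At f (deriv f) (deriv (deriv f) x) x where
  eventually_hasDerivAt := (hf.eventually (by simp)).mono fun _ hy =>
    (hy.differentiableAt (by simp)).hasDerivAt
  hasDerivAt_deriv := ((hf.derivWithin (m := 1) (by norm_num)).differentiableAt
    (by simp)).hasDerivAt

theorem hasDeriv2At_cos (x : ℝ) : HasDeriv2At Real.cos (fun y => -Real.sin y) (-Real.cos x) x where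
  eventually_hasDerivAt := Eventually.of_forall Real.hasDerivAt_cos
  hasDerivAt_deriv := (Real.hasDerivAt_sin x).neg

theorem hasDeriv2At_sin (x : ℝ) : HasDeriv2At Real.sin Real.cos (-Real.sin x) x where
  eventually_hasDerivAt := Eventually.of_forall Real.hasDerivAt_sin
  hasDerivAt_deriv := Real.hasDerivAt_cos x

theorem hasDeriv2At_sqrt_sq_add_sq {r : ℝ} (hr : 0 < r) :
    HasDeriv2At (fun t => √(r ^ 2 + t ^ 2)) (fun t => t / √(r ^ 2 + t ^ 2)) (1 / r) 0 where
  eventually_hasDerivAt := Eventually.of_forall fun t => by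
    have hpos : r ^ 2 + t ^ 2 ≠ 0 := by positivity
    exact ((((hasDerivAt_id t).fun_pow 2).const_add (r ^ 2)).sqrt hpos).congr_deriv
      (by simp only [Nat.cast_ofNat, id_eq, Nat.add_one_sub_one, pow_one]; ring)
  hasDerivAt_deriv := by
    have hρ : HasDerivAt (fun t => √(r ^ 2 + t ^ 2)) 0 0 := by
      simpa using (((hasDerivAt_id (0 : ℝ)).fun_pow 2).const_add (r ^ 2)).sqrt (by positivity)
    exact ((hasDerivAt_id (0 : ℝ)).fun_div hρ (by positivity)).congr_deriv
      (by norm_num [Real.sqrt_sq hr.le]; field_simp)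

theorem hasDeriv2At_arctan_div {r : ℝ} (hr : r ≠ 0) :
    HasDeriv2At (fun t => Real.arctan (t / r)) (fun t => r / (r ^ 2 + t ^ 2)) 0 0 where
  eventually_hasDerivAt := Eventually.of_forall fun t =>
    (((hasDerivAt_id t).div_const r).arctan).congr_deriv (by field_simp; simp)
  hasDerivAt_deriv := by
    have hden : HasDerivAt (fun t : ℝ => r ^ 2 + t ^ 2) 0 0 := by
      simpa using ((hasDerivAt_id (0 : ℝ)).fun_pow 2).const_add (r ^ 2)
    exact ((hasDerivAt_const (0 : ℝ) r).fun_div hden (by positivity)).congr_deriv (by simp)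

noncomputable def radialLap (c : ℝ) (f : ℝ → ℝ) (r : ℝ) : ℝ :=
  deriv (deriv f) r + deriv f r / r - c ^ 2 * f r / r ^ 2

theorem lap_eq_radialLap {V : ℝ × ℝ → ℝ} {f g : ℝ → ℝ} {c r : ℝ} (hr : 0 < r)
    (hf : ContDiffAt ℝ 2 f r) (hg : ContDiffAt ℝ 2 g r)
    (haxis : (fun s => V (s, 0)) =ᶠ[𝓝 r] f)
    (hvert : (fun t => V (r, t)) =ᶠ[𝓝 0] fun t =>
      f √(r ^ 2 + t ^ 2) * Real.cos (c * Real.arctan (t / r))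
        - g √(r ^ 2 + t ^ 2) * Real.sin (c * Real.arctan (t / r))) :
    lap V (r, 0) = radialLap c f r := by
  have hρ0 : √(r ^ 2 + 0 ^ 2) = r := by simp [Real.sqrt_sq hr.le]
  have hρ := hasDeriv2At_sqrt_sq_add_sq hr
  have hθ := (hasDeriv2At_arctan_div hr.ne').const_mul c
  have hf' : HasDeriv2At f (deriv f) (deriv (deriv f) r) (√(r ^ 2 + 0 ^ 2)) := by
    rw [hρ0]; exact hf.hasDeriv2At
  have hg' : HasDeriv2At g (deriv g) (deriv (deriv g) r) (√(r ^ 2 + 0 ^ 2)) := by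
    rw [hρ0]; exact hg.hasDeriv2At
  have hpolar := ((hf'.comp (f := fun t => √(r ^ 2 + t ^ 2)) hρ).mul
    ((hasDeriv2At_cos _).comp (f := fun t => c * Real.arctan (t / r)) hθ)).sub
    ((hg'.comp (f := fun t => √(r ^ 2 + t ^ 2)) hρ).mul
      ((hasDeriv2At_sin _).comp (f := fun t => c * Real.arctan (t / r)) hθ))
  have hyy := (hpolar.congr_of_eventuallyEq hvert).deriv_deriv
  have hxx : deriv (deriv fun s => V (s, 0)) r = deriv (deriv f) r :=
    haxis.deriv.deriv_eq
  simp only [lap, hxx, hyy, radialLap, Real.sqrt_sq hr.le, zero_div, Real.arctan_zero, mul_zero,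
    zero_mul, add_zero, zero_add, sub_zero, mul_one, Real.cos_zero, Real.sin_zero, neg_zero, ne_eq,
    OfNat.ofNat_ne_zero, not_false_eq_true, zero_pow]
  field_simp
  ring

noncomputable def coordE1 (A : Mat3) : ℝ := (A 0 0 - A 1 1) / √2

noncomputable def coordE2 (A : Mat3) : ℝ := (A 0 1 + A 1 0) / √2

def blockMat (x y z : ℝ) : Mat3 := !![y - x, z, 0; z, -y - x, 0; 0, 0, 2 * x]

theorem coordE1_blockMat (x y z : ℝ) : coordE1 (blockMat x y z) = √2 * y := by
  have h2 : √2 ^ 2 = 2 := Real.sq_sqrt (by norm_num)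
  simp only [coordE1, blockMat, of_apply, cons_val', cons_val_zero, cons_val_one,
    cons_val_fin_one]
  field_simp
  linear_combination (-y) * h2

theorem coordE2_blockMat (x y z : ℝ) : coordE2 (blockMat x y z) = √2 * z := by
  have h2 : √2 ^ 2 = 2 := Real.sq_sqrt (by norm_num)
  simp only [coordE2, blockMat, of_apply, cons_val', cons_val_zero, cons_val_one,
    cons_val_fin_one]
  field_simp
  linear_combination (-z) * h2

theorem polar_eq_blockMat (k : ℤ) (φ a0 a1 a2 : ℝ) :
    a0 • E0 + a1 • E1 k φ + a2 • E2mat k φ =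
      blockMat (a0 / √6) ((a1 * Real.cos (k * φ) - a2 * Real.sin (k * φ)) / √2)
        ((a1 * Real.sin (k * φ) + a2 * Real.cos (k * φ)) / √2) := by
  have h2 : √2 ^ 2 = 2 := Real.sq_sqrt (by norm_num)
  have h3 : √3 ^ 2 = 3 := Real.sq_sqrt (by norm_num)
  have h6 : √6 = √3 * √2 := by rw [← Real.sqrt_mul (by norm_num)]; norm_num
  have h32 : √(3 / 2) = √3 / √2 := Real.sqrt_div' 3 (by norm_num)
  simp only [E0, E1, E2mat, nvec, mvec, h6, h32]
  rw [show (k : ℝ) * φ = 2 * (k * φ / 2) by ring]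
  generalize (k : ℝ) * φ / 2 = ψ
  ext i j
  fin_cases i <;> fin_cases j <;>
    simp [I2, e3, blockMat, one_apply, Real.cos_two_mul, Real.sin_two_mul] <;>
    field_simp <;> ring_nf <;> simp only [h2, h3, Real.sin_sq] <;> ring

theorem coordE1_ELrhs_blockMat_mul (a2 b2 c2 x y z : ℝ) :
    coordE1 (ELrhs a2 b2 c2 (blockMat x y z)) * z =
      coordE2 (ELrhs a2 b2 c2 (blockMat x y z)) * y := by
  simp [coordE1, coordE2, ELrhs, blockMat, trace_fin_three]
  ring

theorem lap_linear_comb {f g : ℝ × ℝ → ℝ} {p : ℝ × ℝ} (hf : ContDiffAt ℝ 2 f p)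
    (hg : ContDiffAt ℝ 2 g p) (a b : ℝ) :
    lap (fun x => a * f x + b * g x) p = a * lap f p + b * lap g p := by
  obtain ⟨x, y⟩ := p
  have hx : ContDiffAt ℝ 2 (fun s : ℝ => (s, y)) x := contDiffAt_id.prodMk contDiffAt_const
  have hy : ContDiffAt ℝ 2 (fun s : ℝ => (x, s)) y := contDiffAt_const.prodMk contDiffAt_id
  have hxx := (((hf.comp x hx).hasDeriv2At.const_mul a).add
    ((hg.comp x hx).hasDeriv2At.const_mul b)).deriv_deriv
  have hyy := (((hf.comp y hy).hasDeriv2At.const_mul a).add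
    ((hg.comp y hy).hasDeriv2At.const_mul b)).deriv_deriv
  simp only [Function.comp_def] at hxx hyy
  simp only [lap, hxx, hyy]
  ring

theorem lap_coordE1 {Q : ℝ × ℝ → Mat3} {p : ℝ × ℝ}
    (hQ : ∀ i j, ContDiffAt ℝ 2 (fun x => Q x i j) p) :
    lap (fun x => coordE1 (Q x)) p = coordE1 (matLap Q p) := by
  have hV : (fun x => coordE1 (Q x)) = fun x => (√2)⁻¹ * Q x 0 0 + (-(√2)⁻¹) * Q x 1 1 := by
    funext x; rw [coordE1]; ring
  rw [hV, lap_linear_comb (hQ 0 0) (hQ 1 1), coordE1]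
  simp only [matLap, of_apply]
  ring

theorem lap_coordE2 {Q : ℝ × ℝ → Mat3} {p : ℝ × ℝ}
    (hQ : ∀ i j, ContDiffAt ℝ 2 (fun x => Q x i j) p) :
    lap (fun x => coordE2 (Q x)) p = coordE2 (matLap Q p) := by
  have hU : (fun x => coordE2 (Q x)) = fun x => (√2)⁻¹ * Q x 0 1 + (√2)⁻¹ * Q x 1 0 := by
    funext x; rw [coordE2]; ring
  rw [hU, lap_linear_comb (hQ 0 1) (hQ 1 0), coordE2]
  simp only [matLap, of_apply]
  ring

-- The `c²` terms of the two radial Laplacians cancel, so `c` is arbitrary.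
theorem hasDerivAt_mul_wronskian {f g : ℝ → ℝ} {s : ℝ} (c : ℝ) (hs : s ≠ 0)
    (hf : ContDiffAt ℝ 2 f s) (hg : ContDiffAt ℝ 2 g s) :
    HasDerivAt (fun u => u * (deriv f u * g u - deriv g u * f u))
      (s * (radialLap c f s * g s - radialLap c g s * f s)) s := by
  have hf' := hf.hasDeriv2At
  have hg' := hg.hasDeriv2At
  exact ((hasDerivAt_id s).fun_mul ((hf'.hasDerivAt_deriv.fun_mul hg'.hasDerivAt).fun_sub
    (hg'.hasDerivAt_deriv.fun_mul hf'.hasDerivAt))).congr_deriv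
    (by simp only [radialLap, id]; field_simp; ring)

theorem tendsto_mul_wronskian_nhdsGT_zero {f g f₀ g₀ : ℝ → ℝ} (hf₀ : ContDiffAt ℝ 1 f₀ 0)
    (hg₀ : ContDiffAt ℝ 1 g₀ 0) (hf : ∀ᶠ t in 𝓝[>] 0, f =ᶠ[𝓝 t] f₀)
    (hg : ∀ᶠ t in 𝓝[>] 0, g =ᶠ[𝓝 t] g₀) :
    Tendsto (fun t => t * (deriv f t * g t - deriv g t * f t)) (𝓝[>] 0) (𝓝 0) := by
  have hdf₀ := (hf₀.derivWithin (m := 0) (by norm_num)).continuousAt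
  have hdg₀ := (hg₀.derivWithin (m := 0) (by norm_num)).continuousAt
  have hcont : ContinuousAt (fun t => t * (deriv f₀ t * g₀ t - deriv g₀ t * f₀ t)) 0 :=
    continuousAt_id.mul ((hdf₀.mul hg₀.continuousAt).sub (hdg₀.mul hf₀.continuousAt))
  have hlim := hcont.tendsto.mono_left (nhdsWithin_le_nhds (s := Ioi 0))
  rw [zero_mul] at hlim
  refine hlim.congr' ?_
  filter_upwards [hf, hg] with t hft hgt
  rw [hft.deriv_eq, hgt.deriv_eq, hft.eq_of_nhds, hgt.eq_of_nhds]

theorem eq_zero_of_hasDerivAt_zero_of_tendsto {F : ℝ → ℝ} {r : ℝ} (hr : 0 < r)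
    (hF : ∀ t ∈ Ioc 0 r, HasDerivAt F 0 t) (hlim : Tendsto F (𝓝[>] 0) (𝓝 0)) : F r = 0 := by
  have hconst : ∀ t ∈ Ioc 0 r, F t = F r := fun t ht =>
    (constant_of_has_deriv_right_zero
      (fun x hx => (hF x ⟨ht.1.trans_le hx.1, hx.2⟩).continuousAt.continuousWithinAt)
      (fun x hx => (hF x ⟨ht.1.trans_le hx.1, hx.2.le⟩).hasDerivWithinAt) r
      ⟨ht.2, le_rfl⟩).symm
  have hlim' : Tendsto F (𝓝[>] 0) (𝓝 (F r)) :=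
    tendsto_const_nhds.congr' <|
      eventually_of_mem (Ioc_mem_nhdsGT hr) fun t ht => (hconst t ht).symm
  exact tendsto_nhds_unique hlim' hlim

theorem isOpen_setOf_inBall (R : ℝ≥0∞) : IsOpen {x | inBall R x} :=
  isOpen_lt (ENNReal.continuous_ofReal.comp (by fun_prop)) continuous_const

theorem isOpen_setOf_pos_ofReal_lt (R : ℝ≥0∞) :
    IsOpen {r : ℝ | 0 < r ∧ ENNReal.ofReal r < R} :=
  isOpen_Ioi.inter (isOpen_lt ENNReal.continuous_ofReal continuous_const)

theorem inBall_mk_zero_iff {R : ℝ≥0∞} {s : ℝ} (hs : 0 ≤ s) :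
    inBall R (s, 0) ↔ ENNReal.ofReal s < R := by
  simp [inBall, Real.sqrt_sq hs]

def IsRadialAnsatz (k : ℤ) (R : ℝ≥0∞) (w₀ w₁ w₂ : ℝ → ℝ) (Q : ℝ × ℝ → Mat3) : Prop :=
  ∀ r φ : ℝ, 0 < r → ENNReal.ofReal r < R →
    Q (r * Real.cos φ, r * Real.sin φ) = w₀ r • E0 + w₁ r • E1 k φ + w₂ r • E2mat k φ

namespace IsRadialAnsatz

variable {k : ℤ} {R : ℝ≥0∞} {w₀ w₁ w₂ : ℝ → ℝ} {Q : ℝ × ℝ → Mat3}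

theorem eq_blockMat_of_fst_pos (hQ : IsRadialAnsatz k R w₀ w₁ w₂ Q) {x : ℝ × ℝ} (hx : 0 < x.1)
    (hxR : inBall R x) :
    Q x = blockMat (w₀ √(x.1 ^ 2 + x.2 ^ 2) / √6)
      ((w₁ √(x.1 ^ 2 + x.2 ^ 2) * Real.cos (k * Real.arctan (x.2 / x.1))
        - w₂ √(x.1 ^ 2 + x.2 ^ 2) * Real.sin (k * Real.arctan (x.2 / x.1))) / √2)
      ((w₁ √(x.1 ^ 2 + x.2 ^ 2) * Real.sin (k * Real.arctan (x.2 / x.1))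
        + w₂ √(x.1 ^ 2 + x.2 ^ 2) * Real.cos (k * Real.arctan (x.2 / x.1))) / √2) := by
  obtain ⟨a, b⟩ := x
  have hρ : √(1 + (b / a) ^ 2) = √(a ^ 2 + b ^ 2) / a := by
    rw [show 1 + (b / a) ^ 2 = (a ^ 2 + b ^ 2) / a ^ 2 by field_simp,
      Real.sqrt_div' _ (by positivity), Real.sqrt_sq hx.le]
  have hpos : 0 < √(a ^ 2 + b ^ 2) := Real.sqrt_pos.2 (by positivity)
  have hpolar := hQ _ (Real.arctan (b / a)) hpos hxR
  rw [Real.cos_arctan, Real.sin_arctan, hρ] at hpolar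
  field_simp at hpolar
  rw [hpolar, polar_eq_blockMat]

theorem coordE1_eq_of_fst_pos (hQ : IsRadialAnsatz k R w₀ w₁ w₂ Q) {x : ℝ × ℝ} (hx : 0 < x.1)
    (hxR : inBall R x) :
    coordE1 (Q x) = w₁ √(x.1 ^ 2 + x.2 ^ 2) * Real.cos (k * Real.arctan (x.2 / x.1))
      - w₂ √(x.1 ^ 2 + x.2 ^ 2) * Real.sin (k * Real.arctan (x.2 / x.1)) := by
  rw [hQ.eq_blockMat_of_fst_pos hx hxR, coordE1_blockMat]
  field_simp

theorem coordE2_eq_of_fst_pos (hQ : IsRadialAnsatz k R w₀ w₁ w₂ Q) {x : ℝ × ℝ} (hx : 0 < x.1)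
    (hxR : inBall R x) :
    coordE2 (Q x) = w₂ √(x.1 ^ 2 + x.2 ^ 2) * Real.cos (k * Real.arctan (x.2 / x.1))
      - -w₁ √(x.1 ^ 2 + x.2 ^ 2) * Real.sin (k * Real.arctan (x.2 / x.1)) := by
  rw [hQ.eq_blockMat_of_fst_pos hx hxR, coordE2_blockMat]
  field_simp
  ring

theorem eq_blockMat_mk_zero (hQ : IsRadialAnsatz k R w₀ w₁ w₂ Q) {s : ℝ} (hs : 0 < s)
    (hsR : ENNReal.ofReal s < R) : Q (s, 0) = blockMat (w₀ s / √6) (w₁ s / √2) (w₂ s / √2) := by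
  simpa [Real.sqrt_sq hs.le] using
    hQ.eq_blockMat_of_fst_pos hs ((inBall_mk_zero_iff hs.le).2 hsR)

theorem coordE1_mk_zero (hQ : IsRadialAnsatz k R w₀ w₁ w₂ Q) {s : ℝ} (hs : 0 < s)
    (hsR : ENNReal.ofReal s < R) : coordE1 (Q (s, 0)) = w₁ s := by
  rw [hQ.eq_blockMat_mk_zero hs hsR, coordE1_blockMat]
  field_simp

theorem coordE2_mk_zero (hQ : IsRadialAnsatz k R w₀ w₁ w₂ Q) {s : ℝ} (hs : 0 < s)
    (hsR : ENNReal.ofReal s < R) : coordE2 (Q (s, 0)) = w₂ s := by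
  rw [hQ.eq_blockMat_mk_zero hs hsR, coordE2_blockMat]
  field_simp

theorem radialLap_mul_sub_radialLap_mul_eq_zero {a2 b2 c2 : ℝ}
    (hQ : IsRadialAnsatz k R w₀ w₁ w₂ Q)
    (hQreg : ∀ i j, ContDiffOn ℝ 2 (fun x => Q x i j) {x | inBall R x})
    {r : ℝ} (hr : 0 < r) (hrR : ENNReal.ofReal r < R)
    (hEL : matLap Q (r, 0) = ELrhs a2 b2 c2 (Q (r, 0)))
    (hw₁ : ContDiffAt ℝ 2 w₁ r) (hw₂ : ContDiffAt ℝ 2 w₂ r) :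
    radialLap k w₁ r * w₂ r - radialLap k w₂ r * w₁ r = 0 := by
  have hrB : inBall R (r, 0) := (inBall_mk_zero_iff hr.le).2 hrR
  have hQr : ∀ i j, ContDiffAt ℝ 2 (fun x => Q x i j) (r, 0) := fun i j =>
    (hQreg i j).contDiffAt ((isOpen_setOf_inBall R).mem_nhds hrB)
  have hnear : ∀ᶠ x in 𝓝 (r, 0), 0 < x.1 ∧ inBall R x :=
    ((isOpen_lt continuous_const continuous_fst).inter (isOpen_setOf_inBall R)).mem_nhds ⟨hr, hrB⟩
  have haxis : ∀ᶠ s in 𝓝 r, 0 < s ∧ ENNReal.ofReal s < R := by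
    refine ((continuous_id.prodMk continuous_const).tendsto r).eventually hnear |>.mono ?_
    exact fun s hs => ⟨hs.1, (inBall_mk_zero_iff hs.1.le).1 hs.2⟩
  have hvert : ∀ᶠ t in 𝓝 0, inBall R (r, t) :=
    ((continuous_const.prodMk continuous_id).tendsto 0).eventually hnear |>.mono fun _ h => h.2
  have hlapV : lap (fun x => coordE1 (Q x)) (r, 0) = radialLap k w₁ r :=
    lap_eq_radialLap hr hw₁ hw₂ (haxis.mono fun s hs => hQ.coordE1_mk_zero hs.1 hs.2)
      (hvert.mono fun t ht => hQ.coordE1_eq_of_fst_pos hr ht)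
  have hlapU : lap (fun x => coordE2 (Q x)) (r, 0) = radialLap k w₂ r :=
    lap_eq_radialLap hr hw₂ hw₁.neg (haxis.mono fun s hs => hQ.coordE2_mk_zero hs.1 hs.2)
      (hvert.mono fun t ht => hQ.coordE2_eq_of_fst_pos hr ht)
  have hblock := coordE1_ELrhs_blockMat_mul a2 b2 c2 (w₀ r / √6) (w₁ r / √2) (w₂ r / √2)
  rw [← hQ.eq_blockMat_mk_zero hr hrR, ← hEL, ← lap_coordE1 hQr, ← lap_coordE2 hQr, hlapV,
    hlapU] at hblock
  field_simp at hblock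
  linear_combination hblock

theorem tendsto_mul_wronskian (hQ : IsRadialAnsatz k R w₀ w₁ w₂ Q)
    (hQreg : ∀ i j, ContDiffOn ℝ 2 (fun x => Q x i j) {x | inBall R x}) (hR : 0 < R) :
    Tendsto (fun t => t * (deriv w₁ t * w₂ t - deriv w₂ t * w₁ t)) (𝓝[>] 0) (𝓝 0) := by
  have hQ0 : ∀ i j, ContDiffAt ℝ 2 (fun x => Q x i j) (0, 0) := fun i j =>
    (hQreg i j).contDiffAt ((isOpen_setOf_inBall R).mem_nhds (by simpa [inBall] using hR))
  have hline : ContDiffAt ℝ 2 (fun s : ℝ => (s, (0 : ℝ))) 0 := contDiffAt_id.prodMk contDiffAt_const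
  have hV : ContDiffAt ℝ 1 (fun s => coordE1 (Q (s, 0))) 0 :=
    ((((hQ0 0 0).comp (f := fun s => (s, 0)) 0 hline).sub
      ((hQ0 1 1).comp (f := fun s => (s, 0)) 0 hline)).div_const _).of_le (by norm_num)
  have hU : ContDiffAt ℝ 1 (fun s => coordE2 (Q (s, 0))) 0 :=
    ((((hQ0 0 1).comp (f := fun s => (s, 0)) 0 hline).add
      ((hQ0 1 0).comp (f := fun s => (s, 0)) 0 hline)).div_const _).of_le (by norm_num)
  have hradii : ∀ᶠ t in 𝓝[>] 0, ∀ᶠ s in 𝓝 t, 0 < s ∧ ENNReal.ofReal s < R := by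
    have hlt : {s : ℝ | ENNReal.ofReal s < R} ∈ 𝓝 0 :=
      (isOpen_lt ENNReal.continuous_ofReal continuous_const).mem_nhds (by simpa using hR)
    filter_upwards [self_mem_nhdsWithin, nhdsWithin_le_nhds hlt] with t ht htR
    exact (isOpen_setOf_pos_ofReal_lt R).mem_nhds ⟨ht, htR⟩
  exact tendsto_mul_wronskian_nhdsGT_zero hV hU
    (hradii.mono fun _ h => h.mono fun s hs => (hQ.coordE1_mk_zero hs.1 hs.2).symm)
    (hradii.mono fun _ h => h.mono fun s hs => (hQ.coordE2_mk_zero hs.1 hs.2).symm)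

end IsRadialAnsatz

theorem stmt14_general (a2 b2 c2 : ℝ)
    (k : ℤ) (R : ℝ≥0∞)
    (w₀ w₁ w₂ : ℝ → ℝ)
    (hw₁ : ContDiffOn ℝ 2 w₁ {r : ℝ | 0 < r ∧ ENNReal.ofReal r < R})
    (hw₂ : ContDiffOn ℝ 2 w₂ {r : ℝ | 0 < r ∧ ENNReal.ofReal r < R})
    (Q : ℝ × ℝ → Mat3)
    (hQreg : ∀ i j, ContDiffOn ℝ 2 (fun x => Q x i j) {x | inBall R x})
    (hQ : ∀ r φ : ℝ, 0 < r → ENNReal.ofReal r < R →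
      Q (r * Real.cos φ, r * Real.sin φ) = w₀ r • E0 + w₁ r • E1 k φ + w₂ r • E2mat k φ)
    (hEL : ∀ x, inBall R x → matLap Q x = ELrhs a2 b2 c2 (Q x)) :
    ∀ r : ℝ, 0 < r → ENNReal.ofReal r < R →
      deriv w₁ r * w₂ r - deriv w₂ r * w₁ r = 0 := by
  have hderiv : ∀ s, 0 < s → ENNReal.ofReal s < R →
      HasDerivAt (fun u => u * (deriv w₁ u * w₂ u - deriv w₂ u * w₁ u)) 0 s := by
    intro s hs hsR
    have hsS := (isOpen_setOf_pos_ofReal_lt R).mem_nhds ⟨hs, hsR⟩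
    have hode := IsRadialAnsatz.radialLap_mul_sub_radialLap_mul_eq_zero hQ hQreg hs hsR
      (hEL _ ((inBall_mk_zero_iff hs.le).2 hsR)) (hw₁.contDiffAt hsS) (hw₂.contDiffAt hsS)
    simpa [hode] using hasDerivAt_mul_wronskian (k : ℝ) hs.ne' (hw₁.contDiffAt hsS)
      (hw₂.contDiffAt hsS)
  intro r hr hrR
  have hlim := IsRadialAnsatz.tendsto_mul_wronskian hQ hQreg (zero_le.trans_lt hrR)
  have hW := eq_zero_of_hasDerivAt_zero_of_tendsto hr
    (fun t ht => hderiv t ht.1 ((ENNReal.ofReal_le_ofReal ht.2).trans_lt hrR)) hlim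
  exact (mul_eq_zero.1 hW).resolve_left hr.ne'

/-- for a `k`-radially symmetric `C²` solution of the Euler–Lagrange
equation on `B_R`, one has `w₁'w₂ − w₂'w₁ = 0` on `(0,R)`. -/
theorem stmt14 (a2 b2 c2 : ℝ) (ha : 0 < a2) (hb : 0 < b2) (hc : 0 < c2)
    (k : ℤ) (hk : k ≠ 0) (R : ℝ≥0∞) (hR : 0 < R)
    (w₀ w₁ w₂ : ℝ → ℝ)
    (hw₀ : ContDiffOn ℝ 2 w₀ {r : ℝ | 0 < r ∧ ENNReal.ofReal r < R})
    (hw₁ : ContDiffOn ℝ 2 w₁ {r : ℝ | 0 < r ∧ ENNReal.ofReal r < R})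
    (hw₂ : ContDiffOn ℝ 2 w₂ {r : ℝ | 0 < r ∧ ENNReal.ofReal r < R})
    (Q : ℝ × ℝ → Mat3)
    (hQreg : ∀ i j, ContDiffOn ℝ 2 (fun x => Q x i j) {x | inBall R x})
    (hQ : ∀ r φ : ℝ, 0 < r → ENNReal.ofReal r < R →
      Q (r * Real.cos φ, r * Real.sin φ) = w₀ r • E0 + w₁ r • E1 k φ + w₂ r • E2mat k φ)
    (hEL : ∀ x, inBall R x → matLap Q x = ELrhs a2 b2 c2 (Q x)) :
    ∀ r : ℝ, 0 < r → ENNReal.ofReal r < R →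
      deriv w₁ r * w₂ r - deriv w₂ r * w₁ r = 0 :=
  stmt14_general a2 b2 c2 k R w₀ w₁ w₂ hw₁ hw₂ Q hQreg hQ hEL
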